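/- Let $d$ be a circular decomposable metric on $X=\{1,\dots,n\}$ such that $\sigma$ satisfies Property (⋆), and let $M$ be defined from $\sigma$ as in Definition of $M$. Then $a \prec b \preceq M(a)$ if and only if $d(a,b-1) < d(a,b)$, and $M(a) \prec b \preceq a$ if and only if $d(a,b-1) \geq d(a,b)$. -/

import Mathlib

open Finset

/-- Position of `b` relative to `a` in the clockwise cyclic order on `ZMod n`
(number of clockwise steps from `a` to `b`). -/
def cpos {n : ℕ} (a b : ZMod n) : ℕ := (b - a).val

/-- `a ≺ b ≺ c` in the cyclic order. -/
def btwSS {n : ℕ} (a b c : ZMod n) : Prop := 0 < cpos a b ∧ cpos a b < cpos a c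

/-- `a ≺ b ⪯ c` in the cyclic order. -/
def btwSW {n : ℕ} (a b c : ZMod n) : Prop := 0 < cpos a b ∧ cpos a b ≤ cpos a c

/-- `a ⪯ b ≺ c` in the cyclic order. -/
def btwWS {n : ℕ} (a b c : ZMod n) : Prop := cpos a b < cpos a c

/-- `a ⪯ b ⪯ c` in the cyclic order. -/
def btwWW {n : ℕ} (a b c : ZMod n) : Prop := cpos a b ≤ cpos a c

/-- Circular sum `⊕∑_{i=a}^{b} f i`: the sum of `f` over the indices from `a` to `b`
inclusive, traversed cyclically (wrapping around mod `n`). -/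
noncomputable def csum {n : ℕ} (f : ZMod n → ℝ) (a b : ZMod n) : ℝ :=
  ∑ k ∈ Finset.range ((b - a).val + 1), f (a + (k : ZMod n))

/-- The circular decomposable metric determined by isolation indices `α`:
`d a b = ⊕∑_{i=a+1}^{b} ⊕∑_{j=b+1}^{a} α i j` for `a ≠ b`, and `d a a = 0`. -/
noncomputable def dd {n : ℕ} (α : ZMod n → ZMod n → ℝ) (a b : ZMod n) : ℝ :=
  if a = b then 0 else csum (fun i => csum (fun j => α i j) (b + 1) a) (a + 1) b

section FullSetup

variable {n : ℕ} [NeZero n] (α : ZMod n → ZMod n → ℝ) (σ M : ZMod n → ZMod n)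

/-- `σ c` is the last element `a` of the cyclic sequence `c+1, …, c-1` with
`⊕∑_{i=a+1}^{c} α i c ≥ ⊕∑_{i=c+1}^{a} α i c`. -/
def sigmaSpec : Prop :=
  ∀ c : ZMod n, σ c ≠ c ∧
    (csum (fun i => α i c) (σ c + 1) c ≥ csum (fun i => α i c) (c + 1) (σ c)) ∧
    (∀ a : ZMod n, cpos c (σ c) < cpos c a →
      ¬ (csum (fun i => α i c) (a + 1) c ≥ csum (fun i => α i c) (c + 1) a))

/-- Property (⋆): `a ≺ b ⪯ σ(a)` implies `σ(a) ⪯ σ(b) ≺ a`. -/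
def starProp : Prop := ∀ a b : ZMod n, btwSW a b (σ a) → btwWS (σ a) (σ b) a

/-- `M a` is the last element `m` of the cyclic sequence `a+1, …, a-1`
with `σ(m) ≺ a ≺ m`. -/
def MSpec : Prop :=
  ∀ a : ZMod n, btwSS (σ (M a)) a (M a) ∧
    ∀ m : ZMod n, cpos a (M a) < cpos a m → ¬ btwSS (σ m) a m

end FullSetup

/-! Writing `β_b(a) = ⊕∑_{i=a+1}^{b} α i b - ⊕∑_{i=b+1}^{a} α i b` (`balance α b a`), one has
`d(a,b) - d(a,b-1) = -β_b(a)` for `a ≠ b`. As `a` runs along `b+1, …, b-1` each step lowers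
`β_b(a)` by `2 α (a+1) b ≥ 0`, and `σ(b)` is the last point where `β_b ≥ 0`; hence
`d(a,b-1) < d(a,b)` exactly when `σ(b) ≺ a ≺ b`. Property (⋆) shows that the points `b` with
`σ(b) ≺ a ≺ b` form an initial segment of `a+1, …, a-1`, which by maximality of `M(a)` is
`a ≺ b ⪯ M(a)`; the second equivalence is the complement of the first. -/

section CyclicOrder

variable {n : ℕ}

lemma cpos_self (x : ZMod n) : cpos x x = 0 := by
  simp [cpos]

lemma cpos_pos {x y : ZMod n} (h : x ≠ y) : 0 < cpos x y :=
  Nat.pos_of_ne_zero fun h0 => h (sub_eq_zero.mp ((ZMod.val_eq_zero _).mp h0)).symm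

lemma cpos_add_natCast (c : ZMod n) {k : ℕ} (hk : k < n) : cpos c (c + k) = k := by
  rw [cpos, add_sub_cancel_left, ZMod.val_cast_of_lt hk]

lemma btwSS.ne {x y z : ZMod n} (h : btwSS x y z) : y ≠ z := by
  rintro rfl
  exact lt_irrefl _ h.2

lemma add_natCast_ne_self (c : ZMod n) {k : ℕ} (hk0 : 0 < k) (hk : k < n) :
    c + (k : ZMod n) ≠ c := fun h => by
  have := cpos_add_natCast c hk
  rw [h, cpos_self] at this
  omega

variable [NeZero n]

lemma add_cpos (c x : ZMod n) : c + (cpos c x : ZMod n) = x := by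
  rw [cpos, ZMod.natCast_zmod_val, add_sub_cancel]

/-- The form in which `omega` can reason about the cyclic order: `cpos x y ≡ y.val - x.val`
modulo `n`, with all quantities in `[0, n)`. -/
lemma cpos_add_val_cases (x y : ZMod n) :
    (cpos x y + x.val = y.val ∨ cpos x y + x.val = y.val + n) ∧
      cpos x y < n ∧ x.val < n ∧ y.val < n := by
  refine ⟨?_, ZMod.val_lt _, ZMod.val_lt _, ZMod.val_lt _⟩
  rcases lt_or_ge ((y - x).val + x.val) n with h | h
  · left
    simpa [cpos] using (ZMod.val_add_of_lt h).symm
  · right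
    simpa [cpos] using ZMod.val_add_val_of_le h

lemma cpos_add_one {c x : ZMod n} (h : x + 1 ≠ c) : cpos c (x + 1) = cpos c x + 1 := by
  have hlt : cpos c x + 1 < n := by
    refine lt_of_le_of_ne (cpos_add_val_cases c x).2.1 fun hn => h ?_
    rw [← add_cpos c x, add_assoc, ← Nat.cast_add_one, hn, ZMod.natCast_self, add_zero]
  rw [← cpos_add_natCast c hlt, Nat.cast_add_one, ← add_assoc, add_cpos]

lemma cpos_sub_one {u v : ZMod n} (h : u ≠ v) : cpos u v = cpos u (v - 1) + 1 := by
  simpa using cpos_add_one (c := u) (x := v - 1) (by simpa using h.symm)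

lemma btwSW_iff_not_btwSW {a b m : ZMod n} (h : m ≠ a) :
    btwSW m b a ↔ ¬ btwSW a b m := by
  have := cpos_add_val_cases m b; have := cpos_add_val_cases m a
  have := cpos_add_val_cases a b; have := cpos_add_val_cases a m
  have := (ZMod.val_injective n).ne h
  simp only [btwSW]
  omega

lemma btwSS_iff_cpos_lt {x y z : ZMod n} (h : x ≠ z) :
    btwSS x y z ↔ cpos z x < cpos z y := by
  have := cpos_add_val_cases x y; have := cpos_add_val_cases x z
  have := cpos_add_val_cases z x; have := cpos_add_val_cases z y
  have := (ZMod.val_injective n).ne h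
  simp only [btwSS]
  omega

end CyclicOrder

section CircularSum

variable {n : ℕ}

lemma csum_self (f : ZMod n → ℝ) (u : ZMod n) : csum f u u = f u := by
  simp [csum]

variable [NeZero n]

lemma csum_eq_add_csum (f : ZMod n → ℝ) {u v : ZMod n} (h : u ≠ v) :
    csum f u v = f u + csum f (u + 1) v := by
  have hlen : (v - u).val = (v - (u + 1)).val + 1 := by
    simpa [cpos, sub_sub, add_comm] using cpos_sub_one h
  rw [csum, hlen, Finset.sum_range_succ', csum, add_comm]
  congr 1
  · simp
  · exact Finset.sum_congr rfl fun k _ => by push_cast; ring_nf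

lemma csum_eq_csum_add (f : ZMod n → ℝ) {u v : ZMod n} (h : u ≠ v) :
    csum f u v = csum f u (v - 1) + f v := by
  rw [csum, show (v - u).val = (v - 1 - u).val + 1 from cpos_sub_one h, Finset.sum_range_succ,
    csum]
  congr 2
  have := add_cpos u v
  rwa [cpos_sub_one h] at this

end CircularSum

section Metric

variable {n : ℕ} (α : ZMod n → ZMod n → ℝ)

noncomputable def balance (c x : ZMod n) : ℝ :=
  csum (fun i => α i c) (x + 1) c - csum (fun i => α i c) (c + 1) x

variable {α}

lemma dd_nonneg (hnn : ∀ i j, 0 ≤ α i j) (a b : ZMod n) : 0 ≤ dd α a b := by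
  unfold dd
  split_ifs
  · exact le_rfl
  · exact Finset.sum_nonneg fun _ _ => Finset.sum_nonneg fun _ _ => hnn _ _

variable [NeZero n]

lemma dd_sub_dd_sub_one (hsym : ∀ i j, α i j = α j i) (hdiag : ∀ i, α i i = 0)
    {a b : ZMod n} (hab : a ≠ b) : dd α a b - dd α a (b - 1) = -balance α b a := by
  have hdd : dd α a b = csum (fun i => csum (fun j => α i j) (b + 1) a) (a + 1) b := if_neg hab
  have hrow : csum (fun j => α b j) (b + 1) a = csum (fun i => α i b) (b + 1) a :=
    Finset.sum_congr rfl fun _ _ => hsym _ _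
  rcases eq_or_ne a (b - 1) with hba | hba
  · obtain rfl : b = a + 1 := by rw [hba, sub_add_cancel]
    rw [hdd, dd, if_pos hba, balance, csum_self, csum_self, hdiag, hrow]
    ring
  · have hab1 : a + 1 ≠ b := fun h => hba (by rw [← h, add_sub_cancel_right])
    have hdd1 : dd α a (b - 1) = csum (fun i => csum (fun j => α i j) b a) (a + 1) (b - 1) := by
      rw [dd, if_neg hba, sub_add_cancel]
    have e1 : dd α a b = csum (fun i => csum (fun j => α i j) (b + 1) a) (a + 1) (b - 1)
        + csum (fun i => α i b) (b + 1) a := by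
      rw [hdd, csum_eq_csum_add _ hab1, hrow]
    have e2 : dd α a (b - 1) = csum (fun i => α i b) (a + 1) (b - 1)
        + csum (fun i => csum (fun j => α i j) (b + 1) a) (a + 1) (b - 1) := by
      rw [hdd1, csum, csum, csum, ← Finset.sum_add_distrib]
      exact Finset.sum_congr rfl fun _ _ => csum_eq_add_csum _ hab.symm
    have e3 : csum (fun i => α i b) (a + 1) b = csum (fun i => α i b) (a + 1) (b - 1) := by
      rw [csum_eq_csum_add _ hab1, hdiag, add_zero]
    rw [e1, e2, balance, e3]
    ring

lemma balance_add_one_le (hnn : ∀ i j, 0 ≤ α i j) {c x : ZMod n} (hx : x ≠ c)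
    (hx1 : x + 1 ≠ c) : balance α c (x + 1) ≤ balance α c x := by
  have hfirst := csum_eq_add_csum (fun i => α i c) hx1
  have hlast := csum_eq_csum_add (fun i => α i c) (u := c + 1) (v := x + 1)
    fun h => hx (add_right_cancel h).symm
  simp only [add_sub_cancel_right] at hlast
  simp only [balance, hfirst, hlast]
  linarith [hnn (x + 1) c]

lemma balance_antitone (hnn : ∀ i j, 0 ≤ α i j) {c x y : ZMod n} (hx : x ≠ c)
    (hxy : cpos c x ≤ cpos c y) : balance α c y ≤ balance α c x := by
  have hpos := cpos_pos (Ne.symm hx)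
  suffices ∀ k, cpos c x ≤ k → k < n → balance α c (c + k) ≤ balance α c x by
    simpa [add_cpos] using this _ hxy (cpos_add_val_cases c y).2.1
  intro k hk
  induction k, hk using Nat.le_induction with
  | base => intro _; rw [add_cpos]
  | succ k hk ih =>
    intro hk1
    calc balance α c (c + (k + 1 : ℕ)) = balance α c (c + k + 1) := by push_cast; ring_nf
      _ ≤ balance α c (c + k) :=
        balance_add_one_le hnn (add_natCast_ne_self c (by omega) (by omega))
          (by simpa [add_assoc] using add_natCast_ne_self c (k := k + 1) (by omega) hk1)
      _ ≤ balance α c x := ih (by omega)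

lemma balance_neg_iff (hnn : ∀ i j, 0 ≤ α i j) {σ : ZMod n → ZMod n} (hσ : sigmaSpec α σ)
    {c x : ZMod n} (hx : x ≠ c) : balance α c x < 0 ↔ cpos c (σ c) < cpos c x := by
  refine ⟨fun hneg => ?_, fun hlt => sub_neg.mpr (not_le.mp ((hσ c).2.2 x hlt))⟩
  have hσc : 0 ≤ balance α c (σ c) := sub_nonneg.mpr (hσ c).2.1
  by_contra hle
  linarith [balance_antitone hnn hx (not_lt.mp hle)]

lemma dd_sub_one_lt_dd_iff (hnn : ∀ i j, 0 ≤ α i j) (hsym : ∀ i j, α i j = α j i)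
    (hdiag : ∀ i, α i i = 0) {σ : ZMod n → ZMod n} (hσ : sigmaSpec α σ) {a b : ZMod n}
    (hab : a ≠ b) : dd α a (b - 1) < dd α a b ↔ btwSS (σ b) a b := by
  rw [btwSS_iff_cpos_lt (hσ b).1, ← balance_neg_iff hnn hσ hab, ← sub_pos,
    dd_sub_dd_sub_one hsym hdiag hab, neg_pos]

end Metric

section Star

variable {n : ℕ} [NeZero n] {σ M : ZMod n → ZMod n}

lemma btwSW_M_iff (hσ : ∀ c, σ c ≠ c) (hstar : starProp σ) (hM : MSpec σ M) (a b : ZMod n) :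
    btwSW a b (M a) ↔ btwSS (σ b) a b := by
  refine ⟨fun hb => ?_, fun hb => ⟨cpos_pos hb.ne, not_lt.mp fun hlt => (hM a).2 b hlt hb⟩⟩
  · rcases eq_or_ne b (M a) with rfl | hbM
    · exact (hM a).1
    by_contra hout
    rw [btwSS_iff_cpos_lt (hσ b)] at hout
    have hMa := (hM a).1
    have := cpos_add_val_cases a b; have := cpos_add_val_cases a (M a)
    have := cpos_add_val_cases b a; have := cpos_add_val_cases b (M a)
    have := cpos_add_val_cases b (σ b); have := cpos_add_val_cases (σ b) (σ (M a))
    have := cpos_add_val_cases (σ b) b; have := cpos_add_val_cases (σ (M a)) a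
    have := cpos_add_val_cases (σ (M a)) (M a)
    have := (ZMod.val_injective n).ne (hσ b); have := (ZMod.val_injective n).ne hbM
    have hstep : btwSW b (M a) (σ b) := by
      simp only [btwSW, btwSS] at hb hMa ⊢
      omega
    have := hstar b (M a) hstep
    simp only [btwSW, btwSS, btwWS] at hb hMa this
    omega

end Star

/-- For a circular decomposable metric whose `σ` satisfies Property (⋆):
`a ≺ b ⪯ M(a)` iff `d(a,b-1) < d(a,b)`, and `M(a) ≺ b ⪯ a` iff `d(a,b-1) ≥ d(a,b)`. -/
theorem stmt10 {n : ℕ} [NeZero n] (α : ZMod n → ZMod n → ℝ)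
    (hnn : ∀ i j, 0 ≤ α i j) (hsym : ∀ i j, α i j = α j i) (hdiag : ∀ i, α i i = 0)
    (σ M : ZMod n → ZMod n) (hσ : sigmaSpec α σ) (hstar : starProp σ) (hM : MSpec σ M) :
    ∀ a b : ZMod n,
      (btwSW a b (M a) ↔ dd α a (b - 1) < dd α a b) ∧
      (btwSW (M a) b a ↔ dd α a (b - 1) ≥ dd α a b) := by
  intro a b
  have hMa : M a ≠ a := (btwSS.ne (hM a).1).symm
  have hlt : btwSW a b (M a) ↔ dd α a (b - 1) < dd α a b := by
    rw [btwSW_M_iff (fun c => (hσ c).1) hstar hM]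
    rcases eq_or_ne a b with rfl | hab
    · simp only [btwSS, lt_irrefl, and_false, false_iff, not_lt]
      rw [dd, if_pos rfl]
      exact dd_nonneg hnn a (a - 1)
    · exact (dd_sub_one_lt_dd_iff hnn hsym hdiag hσ hab).symm
  exact ⟨hlt, by rw [btwSW_iff_not_btwSW hMa, hlt, ge_iff_le, not_lt]⟩
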